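/- Let c be the real Banach space of convergent sequences with the sup norm, and let X = {(x, y, z) ∈ c ⊕_∞ c ⊕_∞ c : lim x + lim y + lim z = 0}. Then X is lush. -/

import Mathlib

open Filter Topology Metric
open scoped ENNReal

set_option maxHeartbeats 1000000
set_option synthInstance.maxHeartbeats 1000000

/-- The slice `S(B_X, f, ε) = {x ∈ B_X : Re f(x) > 1 - ε}`. -/
def lushSlice {𝕜 X : Type*} [RCLike 𝕜] [NormedAddCommGroup X] [NormedSpace 𝕜 X]
    (f : X →L[𝕜] 𝕜) (ε : ℝ) : Set X :=
  {x | ‖x‖ ≤ 1 ∧ 1 - ε < RCLike.re (f x)}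

/-- A Banach space is *lush* if for every `x, y` in the unit sphere and every `ε > 0` there is
a norm-one functional `f` such that `y` belongs to the slice `S(B_X, f, ε)` and the distance
from `x` to the convex hull of `𝕋 · S(B_X, f, ε)` is less than `ε`. -/
def IsLush (𝕜 X : Type*) [RCLike 𝕜] [NormedAddCommGroup X] [NormedSpace 𝕜 X]
    [NormedSpace ℝ X] [IsScalarTower ℝ 𝕜 X] : Prop :=
  ∀ x y : X, ‖x‖ = 1 → ‖y‖ = 1 → ∀ ε : ℝ, 0 < ε →
    ∃ f : X →L[𝕜] 𝕜, ‖f‖ = 1 ∧ y ∈ lushSlice f ε ∧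
      Metric.infDist x
        (convexHull ℝ {z | ∃ (θ : 𝕜) (w : X), ‖θ‖ = 1 ∧ w ∈ lushSlice f ε ∧ z = θ • w}) < ε

/-- The ambient space of `c ⊕_∞ c ⊕_∞ c`: triples of bounded real sequences with the
`ℓ_∞`-sum of the sup norms, `‖(x,y,z)‖ = max (‖x‖, ‖y‖, ‖z‖)`. -/
noncomputable abbrev BddSeqTriple : Type :=
  (lp (fun _ : ℕ => ℝ) ∞) × (lp (fun _ : ℕ => ℝ) ∞) × (lp (fun _ : ℕ => ℝ) ∞)

/-- The space `X = {(x,y,z) ∈ c ⊕_∞ c ⊕_∞ c : lim x + lim y + lim z = 0}`: the subspace of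
triples of *convergent* sequences whose limits add up to `0`, inside the sup-normed space of
triples of bounded sequences (so it carries exactly the norm of `c ⊕_∞ c ⊕_∞ c`). -/
noncomputable def limSumZeroSubspace : Submodule ℝ BddSeqTriple where
  carrier := {p | ∃ a b c : ℝ, Filter.Tendsto (⇑p.1) Filter.atTop (nhds a) ∧
    Filter.Tendsto (⇑p.2.1) Filter.atTop (nhds b) ∧
    Filter.Tendsto (⇑p.2.2) Filter.atTop (nhds c) ∧ a + b + c = 0}
  add_mem' := by
    rintro p q ⟨a, b, c, ha, hb, hc, habc⟩ ⟨a', b', c', ha', hb', hc', habc'⟩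
    refine ⟨a + a', b + b', c + c', ?_, ?_, ?_, by linarith⟩
    · first | exact ha.add ha' | (simp only [Prod.fst_add, Prod.snd_add, lp.coeFn_add]; exact ha.add ha')
    · first | exact hb.add hb' | (simp only [Prod.fst_add, Prod.snd_add, lp.coeFn_add]; exact hb.add hb')
    · first | exact hc.add hc' | (simp only [Prod.fst_add, Prod.snd_add, lp.coeFn_add]; exact hc.add hc')
  zero_mem' := ⟨0, 0, 0,
    by simp only [Prod.fst_zero, lp.coeFn_zero]; exact tendsto_const_nhds,
    by simp only [Prod.snd_zero, Prod.fst_zero, lp.coeFn_zero]; exact tendsto_const_nhds,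
    by simp only [Prod.snd_zero, lp.coeFn_zero]; exact tendsto_const_nhds, by ring⟩
  smul_mem' := by
    rintro r p ⟨a, b, c, ha, hb, hc, habc⟩
    refine ⟨r * a, r * b, r * c, ?_, ?_, ?_, by rw [← mul_add, ← mul_add, habc, mul_zero]⟩
    · simpa [lp.coeFn_smul, Pi.smul_def] using ha.const_mul r
    · simpa [lp.coeFn_smul, Pi.smul_def] using hb.const_mul r
    · simpa [lp.coeFn_smul, Pi.smul_def] using hc.const_mul r

/-!
A point `y` of the unit sphere of `X` nearly attains its norm at one coordinate `n` of one of the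
three sequences. The unit vector `e` at that coordinate has limit `0`, so it lies in `X`, and `ℝ e`
is an `ℓ_∞`-summand of `X` whose coordinate functional `f` (up to sign) nearly norms `y`. Moving a
point `x` of the unit ball along `e` until `f` takes the value `1`, resp. `-1`, keeps it in the
ball, so `x` lies on a segment joining a point of the slice of `f` to the negative of another:
its distance to the convex hull in the definition of lushness is `0`.
-/

/-- `e` is a sup-norm coordinate direction for `f`: with `‖f‖ ≤ 1` and `f e = 1`, the inequality
below says exactly that `X = ker f ⊕_∞ ℝ e`, i.e. `ℝ e` is an M-summand of `X`. -/
structure IsSupNormCoordinate {X : Type*} [NormedAddCommGroup X] [NormedSpace ℝ X]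
    (f : X →L[ℝ] ℝ) (e : X) : Prop where
  apply_eq_one : f e = 1
  norm_le_one : ‖f‖ ≤ 1
  norm_add_smul_le : ∀ (p : X) (t : ℝ), ‖p + t • e‖ ≤ max ‖p‖ |f p + t|

namespace IsSupNormCoordinate

variable {X Y : Type*} [NormedAddCommGroup X] [NormedSpace ℝ X]
  [NormedAddCommGroup Y] [NormedSpace ℝ Y] {f : X →L[ℝ] ℝ} {e : X}

theorem neg (h : IsSupNormCoordinate f e) : IsSupNormCoordinate (-f) (-e) where
  apply_eq_one := by simp [h.apply_eq_one]
  norm_le_one := by simpa using h.norm_le_one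
  norm_add_smul_le p t :=
    calc ‖p + t • -e‖ = ‖p + (-t) • e‖ := by rw [smul_neg, neg_smul]
      _ ≤ max ‖p‖ |f p + -t| := h.norm_add_smul_le p (-t)
      _ = max ‖p‖ |(-f) p + t| := by
        rw [← abs_neg]; congr 2; simp only [neg_apply]; ring

theorem norm_eq_one (h : IsSupNormCoordinate f e) : ‖f‖ = 1 := by
  have he : ‖e‖ ≤ 1 := by simpa [h.apply_eq_one] using h.norm_add_smul_le 0 1
  refine h.norm_le_one.antisymm ?_
  calc (1 : ℝ) = f e := h.apply_eq_one.symm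
    _ ≤ ‖f e‖ := le_abs_self _
    _ ≤ ‖f‖ * ‖e‖ := f.le_opNorm e
    _ ≤ ‖f‖ := mul_le_of_le_one_right (norm_nonneg f) he

theorem mem_convexHull_slice (h : IsSupNormCoordinate f e) {ε : ℝ} (hε : 0 < ε) {x : X}
    (hx : ‖x‖ ≤ 1) :
    x ∈ convexHull ℝ {z | ∃ (θ : ℝ) (w : X), ‖θ‖ = 1 ∧ w ∈ lushSlice f ε ∧ z = θ • w} := by
  have hfx : |f x| ≤ 1 := (f.le_of_opNorm_le h.norm_le_one x).trans (by simpa using hx)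
  have hball : ∀ s : ℝ, |s| = 1 → ‖x + (s - f x) • e‖ ≤ 1 := fun s hs =>
    (h.norm_add_smul_le x _).trans (max_le hx (by simp [hs]))
  set S := {z | ∃ (θ : ℝ) (w : X), ‖θ‖ = 1 ∧ w ∈ lushSlice f ε ∧ z = θ • w}
  have hu : x + (1 - f x) • e ∈ S :=
    ⟨1, _, by simp, ⟨hball 1 (by simp), by simp [h.apply_eq_one, hε]⟩, (one_smul _ _).symm⟩
  have hv : x + (-1 - f x) • e ∈ S :=
    ⟨-1, -(x + (-1 - f x) • e), by simp,
      ⟨by rw [norm_neg]; exact hball (-1) (by simp), by simp [h.apply_eq_one, hε]⟩, by module⟩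
  exact segment_subset_convexHull hu hv
    ⟨(1 + f x) / 2, (1 - f x) / 2, by linarith [abs_le.mp hfx], by linarith [abs_le.mp hfx],
      by ring, by module⟩

theorem restrict (h : IsSupNormCoordinate f e) {S : Submodule ℝ X} (he : e ∈ S) :
    IsSupNormCoordinate (f.comp S.subtypeL) ⟨e, he⟩ where
  apply_eq_one := h.apply_eq_one
  norm_le_one := (f.opNorm_comp_le _).trans
    (mul_le_one₀ h.norm_le_one (norm_nonneg _) (Submodule.norm_subtypeL_le S))
  norm_add_smul_le p t := h.norm_add_smul_le p t

theorem prodFst (h : IsSupNormCoordinate f e) :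
    IsSupNormCoordinate (f.comp (ContinuousLinearMap.fst ℝ X Y)) (e, 0) where
  apply_eq_one := h.apply_eq_one
  norm_le_one := (f.opNorm_comp_le _).trans
    (mul_le_one₀ h.norm_le_one (norm_nonneg _) (ContinuousLinearMap.norm_fst_le ..))
  norm_add_smul_le p t := by
    simp only [Prod.norm_def, Prod.fst_add, Prod.snd_add, Prod.smul_mk, smul_zero, add_zero]
    exact max_le ((h.norm_add_smul_le p.1 t).trans (max_le_max (le_max_left _ _) le_rfl))
      ((le_max_right _ _).trans (le_max_left _ _))

theorem prodSnd (h : IsSupNormCoordinate f e) :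
    IsSupNormCoordinate (f.comp (ContinuousLinearMap.snd ℝ Y X)) (0, e) where
  apply_eq_one := h.apply_eq_one
  norm_le_one := (f.opNorm_comp_le _).trans
    (mul_le_one₀ h.norm_le_one (norm_nonneg _) (ContinuousLinearMap.norm_snd_le ..))
  norm_add_smul_le p t := by
    simp only [Prod.norm_def, Prod.fst_add, Prod.snd_add, Prod.smul_mk, smul_zero, add_zero]
    exact max_le ((le_max_left _ _).trans (le_max_left _ _))
      ((h.norm_add_smul_le p.2 t).trans (max_le_max (le_max_right _ _) le_rfl))

end IsSupNormCoordinate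

theorem isLush_of_forall_exists_isSupNormCoordinate {X : Type*} [NormedAddCommGroup X]
    [NormedSpace ℝ X]
    (h : ∀ y : X, ‖y‖ = 1 → ∀ ε > 0,
      ∃ (f : X →L[ℝ] ℝ) (e : X), IsSupNormCoordinate f e ∧ 1 - ε < |f y|) :
    IsLush ℝ X := by
  intro x y hx hy ε hε
  obtain ⟨f, e, hfe, hfy⟩ := h y hy ε hε
  obtain ⟨g, u, hgu, hgy⟩ : ∃ (g : X →L[ℝ] ℝ) (u : X), IsSupNormCoordinate g u ∧ 1 - ε < g y := by
    rcases le_or_gt 0 (f y) with hpos | hneg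
    · exact ⟨f, e, hfe, by rwa [abs_of_nonneg hpos] at hfy⟩
    · exact ⟨-f, -e, hfe.neg, by rwa [abs_of_neg hneg] at hfy⟩
  refine ⟨g, hgu.norm_eq_one, ⟨hy.le, by simpa using hgy⟩, ?_⟩
  rw [infDist_zero_of_mem (hgu.mem_convexHull_slice hε hx.le)]
  exact hε

namespace lp

variable {α : Type*}

theorem isSupNormCoordinate_single [DecidableEq α] (i : α) :
    IsSupNormCoordinate (lp.evalCLM ℝ (fun _ : α => ℝ) ∞ i) (lp.single ∞ i 1) where
  apply_eq_one := lp.single_apply_self ∞ i 1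
  norm_le_one := LinearMap.mkContinuous_norm_le _ zero_le_one _
  norm_add_smul_le p t := by
    refine lp.norm_le_of_forall_le (le_max_of_le_left (norm_nonneg p)) fun j => ?_
    change |p j + t * lp.single (E := fun _ : α => ℝ) ∞ i 1 j| ≤ max ‖p‖ |p i + t|
    rcases eq_or_ne j i with rfl | hji
    · rw [lp.single_apply_self, mul_one]
      exact le_max_right _ _
    · rw [lp.single_apply_ne ∞ i _ hji, mul_zero, add_zero]
      exact le_max_of_le_left (lp.norm_apply_le_norm ENNReal.top_ne_zero p j)

theorem tendsto_single_cofinite [DecidableEq α] (p : ℝ≥0∞) (i : α) (a : ℝ) :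
    Tendsto (⇑(lp.single (E := fun _ : α => ℝ) p i a)) cofinite (𝓝 0) :=
  tendsto_const_nhds.congr' <| (Set.finite_singleton i).eventually_cofinite_notMem.mono
    fun _ hj => (lp.single_apply_ne (E := fun _ : α => ℝ) p i a hj).symm

theorem exists_lt_abs_apply_of_lt_norm [Nonempty α] {q : lp (fun _ : α => ℝ) ∞} {r : ℝ}
    (hr : r < ‖q‖) : ∃ i, r < |q i| :=
  exists_lt_of_lt_ciSup (lp.norm_eq_ciSup q ▸ hr)

end lp

theorem mem_limSumZeroSubspace_of_tendsto_zero {p : BddSeqTriple}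
    (h₁ : Tendsto (⇑p.1) atTop (𝓝 0)) (h₂ : Tendsto (⇑p.2.1) atTop (𝓝 0))
    (h₃ : Tendsto (⇑p.2.2) atTop (𝓝 0)) : p ∈ limSumZeroSubspace :=
  ⟨0, 0, 0, h₁, h₂, h₃, by norm_num⟩

theorem exists_isSupNormCoordinate_mem_limSumZeroSubspace {p : BddSeqTriple} {r : ℝ}
    (hr : r < ‖p‖) :
    ∃ (g : BddSeqTriple →L[ℝ] ℝ) (E : BddSeqTriple),
      IsSupNormCoordinate g E ∧ E ∈ limSumZeroSubspace ∧ r < |g p| := by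
  have hsingle (n : ℕ) := (lp.tendsto_single_cofinite ∞ n 1).mono_left Nat.cofinite_eq_atTop.ge
  have hzero : Tendsto (⇑(0 : lp (fun _ : ℕ => ℝ) ∞)) atTop (𝓝 0) := tendsto_const_nhds
  rcases lt_max_iff.mp hr with h₁ | h₂₃
  · obtain ⟨n, hn⟩ := lp.exists_lt_abs_apply_of_lt_norm h₁
    exact ⟨_, _, (lp.isSupNormCoordinate_single n).prodFst,
      mem_limSumZeroSubspace_of_tendsto_zero (hsingle n) hzero hzero, hn⟩
  rcases lt_max_iff.mp h₂₃ with h₂ | h₃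
  · obtain ⟨n, hn⟩ := lp.exists_lt_abs_apply_of_lt_norm h₂
    exact ⟨_, _, (lp.isSupNormCoordinate_single n).prodFst.prodSnd,
      mem_limSumZeroSubspace_of_tendsto_zero hzero (hsingle n) hzero, hn⟩
  · obtain ⟨n, hn⟩ := lp.exists_lt_abs_apply_of_lt_norm h₃
    exact ⟨_, _, (lp.isSupNormCoordinate_single n).prodSnd.prodSnd,
      mem_limSumZeroSubspace_of_tendsto_zero hzero hzero (hsingle n), hn⟩

/-- The space `X = {(x,y,z) ∈ c ⊕_∞ c ⊕_∞ c : lim x + lim y + lim z = 0}` is lush. -/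
theorem isLush_limSumZeroSubspace : IsLush ℝ ↥limSumZeroSubspace := by
  refine isLush_of_forall_exists_isSupNormCoordinate fun y hy ε hε => ?_
  obtain ⟨g, E, hgE, hE, hgy⟩ := exists_isSupNormCoordinate_mem_limSumZeroSubspace
    (show 1 - ε < ‖(y : BddSeqTriple)‖ by rw [Submodule.norm_coe, hy]; linarith)
  exact ⟨_, _, hgE.restrict hE, hgy⟩
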